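/- Suppose q : [-1,1] → ℝ is continuous, real-valued, and strictly increasing, and let Π = {λ ∈ ℂ : Im λ < 0, q(-1) < Re λ < q(1)}. Define Q(λ) = ∫_{-1}^{1} √(i(q(x) - λ)) dx with the branch fixed by Q(q(-1)) = e^{iπ/4} α, α > 0. Then Re Q'(λ) < 0 for all λ ∈ Π; in particular Q is injective on each horizontal line in Π. -/

import Mathlib

/-!
Differentiating under the integral sign, `Q'(λ) = -½ ∫ e^{iπ/4} (q(x) - λ)^{-1/2} dx`. For
`Im λ < 0` every `q(x) - λ` lies in the upper half-plane, so each integrand has argument in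
`[-π/4, π/4]` and positive real part; hence `Re Q' < 0` on the whole lower half-plane. On a convex
set a derivative with real part of constant sign forces injectivity (Noshiro–Warschawski), so `Q`
is injective on the lower half-plane, in particular on horizontal lines in `Π`.
-/

open Complex Set

/-- `Q(λ) = ∫_{-1}^1 √(i(q(x)-λ)) dx` with the branch fixed by `Q(q(-1)) ∈ e^{iπ/4}·ℝ₊`,
realized as `√(i(q(x)-λ)) = e^{iπ/4}·(q(x)-λ)^{1/2}` with the principal square root
(note `Im(q(x)-λ) > 0` for `Im λ < 0`). -/
noncomputable def Qmodel (q : ℝ → ℝ) (lam : ℂ) : ℂ :=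
  ∫ x in (-1:ℝ)..1, Complex.exp ((Real.pi : ℂ) * Complex.I / 4) *
    ((q x : ℂ) - lam) ^ ((1:ℂ)/2)

open MeasureTheory Filter Topology

/-- The argument of `e^{iπ/4} z^{-1/2}` is `π/4 - arg z / 2 ∈ [-π/4, π/4]`. -/
lemma Complex.re_exp_pi_div_four_mul_cpow_neg_half_pos {z : ℂ} (hz₀ : z ≠ 0) (hz : 0 ≤ z.im) :
    0 < (exp ((Real.pi : ℂ) * I / 4) * z ^ (-(1/2) : ℂ)).re := by
  have harg₀ : 0 ≤ z.arg := arg_nonneg_iff.2 hz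
  have harg_le : z.arg ≤ Real.pi := arg_le_pi z
  have him : ((Real.pi : ℂ) * I / 4 + log z * (-(1/2) : ℂ)).im = Real.pi / 4 - z.arg / 2 := by
    simp only [one_div, mul_neg, add_im, div_ofNat_im, mul_im, ofReal_re, I_im, mul_one, ofReal_im,
      I_re, mul_zero, add_zero, neg_im, inv_im, im_ofNat, neg_zero, normSq_ofNat, zero_div, log_im,
      inv_re, re_ofNat, div_self_mul_self', zero_add]
    ring
  rw [cpow_def_of_ne_zero hz₀, ← Complex.exp_add, exp_re, him]
  refine mul_pos (Real.exp_pos _) (Real.cos_pos_of_mem_Ioo ⟨?_, ?_⟩) <;> linarith [Real.pi_pos]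

lemma Complex.norm_cpow_neg_half_le {u : ℂ} {ε : ℝ} (hε : 0 < ε) (hu : ε ≤ u.im) :
    ‖u ^ (-(1/2) : ℂ)‖ ≤ ε ^ (-(1/2) : ℝ) := by
  have hexp : (-(1/2) : ℂ) = ((-(1/2) : ℝ) : ℂ) := by push_cast; ring
  rw [hexp, norm_cpow_real]
  exact Real.rpow_le_rpow_of_nonpos hε (hu.trans (im_le_norm u)) (by norm_num)

/-- On the lower half-plane `f t - w` stays in the upper half-plane, away from the branch cut,
and `Im (f t - w) ≥ -Im z / 2` near `z` gives a uniform bound on the differentiated integrand. -/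
lemma hasDerivAt_intervalIntegral_sub_cpow_half {f : ℝ → ℝ} {a b : ℝ}
    (hf : ContinuousOn f (uIcc a b)) {z : ℂ} (hz : z.im < 0) :
    HasDerivAt (fun w : ℂ => ∫ t in a..b, ((f t : ℂ) - w) ^ (1/2 : ℂ))
      (∫ t in a..b, -(1/2 : ℂ) * ((f t : ℂ) - z) ^ (-(1/2) : ℂ)) z := by
  set s : Set ℂ := {w | w.im < z.im / 2}
  have hs : s ∈ 𝓝 z :=
    (isOpen_lt continuous_im continuous_const).mem_nhds (show z.im < z.im / 2 by linarith)
  have hε : 0 < -z.im / 2 := by linarith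
  have him : ∀ w ∈ s, ∀ t, -z.im / 2 ≤ ((f t : ℂ) - w).im := fun w hw t => by
    simp only [s, mem_ofPred_eq] at hw
    simp only [sub_im, ofReal_im]
    linarith
  have hslit : ∀ w ∈ s, ∀ t, ((f t : ℂ) - w) ∈ slitPlane := fun w hw t =>
    Or.inr (by linarith [him w hw t])
  have hcont : ∀ w ∈ s, ∀ c : ℂ, ContinuousOn (fun t => ((f t : ℂ) - w) ^ c) (uIcc a b) :=
    fun w hw c => ((continuous_ofReal.comp_continuousOn hf).sub continuousOn_const).cpow_const
      fun t _ => hslit w hw t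
  have hmeas : ∀ w ∈ s, ∀ c : ℂ,
      AEStronglyMeasurable (fun t => ((f t : ℂ) - w) ^ c) (volume.restrict (uIoc a b)) :=
    fun w hw c => ((hcont w hw c).mono uIoc_subset_uIcc).aestronglyMeasurable measurableSet_uIoc
  have hzs : z ∈ s := mem_of_mem_nhds hs
  have key := intervalIntegral.hasDerivAt_integral_of_dominated_loc_of_deriv_le
    (F := fun w t => ((f t : ℂ) - w) ^ (1/2 : ℂ))
    (F' := fun w t => -(1/2 : ℂ) * ((f t : ℂ) - w) ^ (-(1/2) : ℂ))
    (bound := fun _ => 1/2 * (-z.im / 2) ^ (-(1/2) : ℝ)) hs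
    (eventually_of_mem hs fun w hw => hmeas w hw _) (hcont z hzs _).intervalIntegrable
    ((hmeas z hzs _).const_mul _)
    (Eventually.of_forall fun t _ w hw => by
      rw [norm_mul, norm_neg, norm_div, norm_one, Complex.norm_ofNat]
      gcongr
      exact norm_cpow_neg_half_le hε (him w hw t))
    intervalIntegrable_const
    (Eventually.of_forall fun t _ w hw => by
      have h := ((hasDerivAt_id' w).const_sub (f t : ℂ)).cpow_const (c := 1/2) (hslit w hw t)
      rwa [show (1/2 : ℂ) - 1 = -(1/2) by norm_num, mul_neg_one, ← neg_mul] at h)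
  exact key.2

lemma intervalIntegral.re_integral_pos_of_continuousOn {g : ℝ → ℂ} {a b : ℝ} (hab : a < b)
    (hg : ContinuousOn g (Icc a b)) (hpos : ∀ t ∈ Icc a b, 0 < (g t).re) :
    0 < (∫ t in a..b, g t).re := by
  have hIcc : uIcc a b ⊆ Icc a b := by rw [uIcc_of_le hab.le]
  rw [← RCLike.re_to_complex, ← intervalIntegral_re (hg.mono hIcc).intervalIntegrable]
  exact intervalIntegral_pos_of_pos_on
    ((continuous_re.comp_continuousOn hg).mono hIcc).intervalIntegrable
    (fun t ht => hpos t (Ioo_subset_Icc_self ht)) hab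

/-- Noshiro–Warschawski: along the segment from `z` to `w`, `t ↦ Re (f (z + t(w - z)) / (w - z))`
has derivative `Re f'`, so it is strictly increasing and `f z ≠ f w`. -/
theorem Convex.injOn_of_hasDerivAt_re_pos {f f' : ℂ → ℂ} {U : Set ℂ} (hU : Convex ℝ U)
    (hf : ∀ z ∈ U, HasDerivAt f (f' z) z) (hf' : ∀ z ∈ U, 0 < (f' z).re) : InjOn f U := by
  intro z hz w hw hfzw
  by_contra hne
  have hwz : w - z ≠ 0 := sub_ne_zero.2 (Ne.symm hne)
  set p : ℝ → ℂ := fun t => z + t • (w - z)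
  have hpU : ∀ t ∈ Icc (0 : ℝ) 1, p t ∈ U := fun t ht => hU.add_smul_sub_mem hz hw ht
  set g : ℝ → ℝ := fun t => (f (p t) / (w - z)).re
  have hg : ∀ t ∈ Icc (0 : ℝ) 1, HasDerivAt g (f' (p t)).re t := fun t ht => by
    have hp : HasDerivAt p (w - z) t := by
      simpa only [one_smul] using ((hasDerivAt_id' t).smul_const (w - z)).const_add z
    have h := ((hf _ (hpU t ht)).comp t hp).div_const (w - z)
    rw [mul_div_cancel_right₀ _ hwz] at h
    exact reCLM.hasFDerivAt.comp_hasDerivAt t h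
  obtain ⟨c, hc, hslope⟩ := exists_hasDerivAt_eq_slope g (fun t => (f' (p t)).re) zero_lt_one
    (fun t ht => (hg t ht).continuousAt.continuousWithinAt)
    (fun t ht => hg t (Ioo_subset_Icc_self ht))
  have hg01 : g 1 = g 0 := by simp [g, p, ← hfzw]
  rw [hg01, sub_self, zero_div] at hslope
  exact (hf' _ (hpU c (Ioo_subset_Icc_self hc))).ne' hslope

theorem Convex.injOn_of_hasDerivAt_re_neg {f f' : ℂ → ℂ} {U : Set ℂ} (hU : Convex ℝ U)
    (hf : ∀ z ∈ U, HasDerivAt f (f' z) z) (hf' : ∀ z ∈ U, (f' z).re < 0) : InjOn f U :=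
  fun z hz w hw hfzw => hU.injOn_of_hasDerivAt_re_pos (f := -f) (f' := -f')
    (fun z hz => (hf z hz).neg) (fun z hz => by simpa using hf' z hz) hz hw (by simp [hfzw])

lemma hasDerivAt_Qmodel {q : ℝ → ℝ} (hq : ContinuousOn q (Icc (-1) 1)) {lam : ℂ}
    (hlam : lam.im < 0) :
    HasDerivAt (Qmodel q) (-(∫ x in (-1:ℝ)..1,
      exp ((Real.pi : ℂ) * I / 4) * ((q x : ℂ) - lam) ^ (-(1/2) : ℂ)) / 2) lam := by
  have hQ : Qmodel q =
      fun w => exp ((Real.pi : ℂ) * I / 4) * ∫ x in (-1:ℝ)..1, ((q x : ℂ) - w) ^ (1/2 : ℂ) := by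
    funext w
    exact intervalIntegral.integral_const_mul _ _
  rw [← uIcc_of_le (by norm_num : (-1:ℝ) ≤ 1)] at hq
  rw [hQ]
  refine ((hasDerivAt_intervalIntegral_sub_cpow_half hq hlam).const_mul _).congr_deriv ?_
  simp only [intervalIntegral.integral_const_mul]
  ring

lemma re_deriv_Qmodel_neg {q : ℝ → ℝ} (hq : ContinuousOn q (Icc (-1) 1)) {lam : ℂ}
    (hlam : lam.im < 0) : (deriv (Qmodel q) lam).re < 0 := by
  have him : ∀ x, 0 < ((q x : ℂ) - lam).im := fun x => by
    simp only [sub_im, ofReal_im, zero_sub, Left.neg_pos_iff]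
    exact hlam
  have hpos := intervalIntegral.re_integral_pos_of_continuousOn (by norm_num : (-1:ℝ) < 1)
    (g := fun x => exp ((Real.pi : ℂ) * I / 4) * ((q x : ℂ) - lam) ^ (-(1/2) : ℂ))
    (continuousOn_const.mul (((continuous_ofReal.comp_continuousOn hq).sub
      continuousOn_const).cpow_const fun x _ => Or.inr (him x).ne'))
    (fun x _ => re_exp_pi_div_four_mul_cpow_neg_half_pos
      (fun h => (him x).ne' (by rw [h, zero_im])) (him x).le)
  rw [(hasDerivAt_Qmodel hq hlam).deriv, div_ofNat_re, neg_re]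
  linarith

theorem stmt_7_general (q : ℝ → ℝ) (hq : ContinuousOn q (Icc (-1) 1)) :
    ∀ lam : ℂ, lam.im < 0 → q (-1) < lam.re → lam.re < q 1 →
      (deriv (Qmodel q) lam).re < 0 ∧
      ∀ μ : ℂ, μ.im < 0 → q (-1) < μ.re → μ.re < q 1 → μ.im = lam.im →
        Qmodel q μ = Qmodel q lam → μ = lam := by
  have hinj : InjOn (Qmodel q) {z : ℂ | z.im < 0} :=
    (convex_halfSpace_im_lt 0).injOn_of_hasDerivAt_re_neg
      (fun z hz => (hasDerivAt_Qmodel hq hz).differentiableAt.hasDerivAt)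
      (fun z hz => re_deriv_Qmodel_neg hq hz)
  exact fun lam hlam _ _ => ⟨re_deriv_Qmodel_neg hq hlam, fun μ hμ _ _ _ hQ => hinj hμ hlam hQ⟩

/-- For `q` continuous and strictly increasing, `Re Q'(λ) < 0` throughout the semi-strip
`Π = {Im λ < 0, q(-1) < Re λ < q(1)}`; in particular `Q` is injective on each horizontal
line in `Π`. -/
theorem stmt_7 (q : ℝ → ℝ) (hq : ContinuousOn q (Icc (-1) 1))
    (hmono : StrictMonoOn q (Icc (-1) 1)) :
    ∀ lam : ℂ, lam.im < 0 → q (-1) < lam.re → lam.re < q 1 →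
      (deriv (Qmodel q) lam).re < 0 ∧
      ∀ μ : ℂ, μ.im < 0 → q (-1) < μ.re → μ.re < q 1 → μ.im = lam.im →
        Qmodel q μ = Qmodel q lam → μ = lam :=
  stmt_7_general q hq
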